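/- arXiv:2108.03595 — 2 statements merged into one kernel-verified Lean document; each statement's English description precedes it below -/
import Mathlib

section
/- Euler's transformation: for |z| < 1 and c with −c ∉ ℕ₀, ₂F₁(a,b;c;z) = (1−z)^{c−a−b} ₂F₁(c−a, c−b; c; z), where (1−z)^{c−a−b} denotes the principal branch. -/
/-!
By the binomial series, `(1 - z) ^ (c - a - b) = ∑ (a + b - c)ₙ / n! zⁿ`, so the right-hand side is
the Cauchy product of two power series that converge absolutely on the unit disc. Its coefficients
`Eₙ` start with `E₀ = 1` and satisfy the first-order recurrence
`(n + 1) (c + n) Eₙ₊₁ = (a + n) (b + n) Eₙ` of the coefficients of `₂F₁(a, b; c; z)`: writing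
`eₖ = (a + b - c)ₖ / k!` and `Bₘ` for the coefficients of `₂F₁(c - a, c - b; c; z)`, the difference
of the two sides is the telescoping sum of `G (k + 1) - G k` over `k ≤ n`, where
`G k = k (k - c - 2n - 1) eₖ Bₙ₊₁₋ₖ`, as the recurrences of `e` and `B` show term by term.
-/

open scoped BigOperators

/-- The rising factorial (Pochhammer symbol) `(a)_n = a(a+1)⋯(a+n-1)`. -/
noncomputable def risingFactorial (a : ℂ) (n : ℕ) : ℂ :=
  ∏ i ∈ Finset.range n, (a + i)

/-- The Gauss hypergeometric series `₂F₁(a,b;c;z) = ∑ (a)_n (b)_n / ((c)_n n!) zⁿ`. -/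
noncomputable def hyp2F1 (a b c z : ℂ) : ℂ :=
  ∑' n : ℕ, risingFactorial a n * risingFactorial b n /
    (risingFactorial c n * (n.factorial : ℂ)) * z ^ n

open Finset FormalMultilinearSeries
open scoped Nat ENNReal

lemma one_le_radius_ordinaryHypergeometricSeries {𝕂 : Type*} [RCLike 𝕂] (𝔸 : Type*)
    [NormedDivisionRing 𝔸] [NormedAlgebra 𝕂 𝔸] (a b : 𝕂) {c : 𝕂} (hc : ∀ n : ℕ, c ≠ -(n : 𝕂)) :
    1 ≤ (ordinaryHypergeometricSeries 𝔸 a b c).radius := by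
  by_cases ha : ∃ k : ℕ, a = -k
  · obtain ⟨k, rfl⟩ := ha
    simp [ordinaryHypergeometric_radius_top_of_neg_nat₁]
  by_cases hb : ∃ k : ℕ, b = -k
  · obtain ⟨k, rfl⟩ := hb
    simp [ordinaryHypergeometric_radius_top_of_neg_nat₂]
  push Not at ha hb
  refine (ordinaryHypergeometricSeries_radius_eq_one 𝔸 a b c fun k => ?_).ge
  refine ⟨?_, ?_, ?_⟩ <;> intro h
  exacts [ha k (by rw [h, neg_neg]), hb k (by rw [h, neg_neg]), hc k (by rw [h, neg_neg])]

lemma summable_norm_mul_pow_of_lt_radius {𝕜 : Type*} [NontriviallyNormedField 𝕜]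
    {f : ℕ → 𝕜} {z : 𝕜} (h : (‖z‖₊ : ℝ≥0∞) < (ofScalars 𝕜 f).radius) :
    Summable fun n => ‖f n * z ^ n‖ := by
  simpa [ofScalars_norm] using (ofScalars 𝕜 f).summable_norm_mul_pow h

lemma risingFactorial_succ (a : ℂ) (n : ℕ) :
    risingFactorial a (n + 1) = risingFactorial a n * (a + n) :=
  prod_range_succ _ n

lemma risingFactorial_eq_ascPochhammer_eval (a : ℂ) (n : ℕ) :
    risingFactorial a n = (ascPochhammer ℂ n).eval a := by
  induction n with
  | zero => simp [risingFactorial]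
  | succ n ih => rw [risingFactorial_succ, ascPochhammer_succ_eval, ih]

lemma risingFactorial_ne_zero {c : ℂ} (hc : ∀ n : ℕ, c ≠ -(n : ℂ)) (n : ℕ) :
    risingFactorial c n ≠ 0 :=
  prod_ne_zero_iff.2 fun i _ h => hc i (eq_neg_of_add_eq_zero_left h)

section Binomial

lemma Ring.multichoose_eq_risingFactorial_div (s : ℂ) (n : ℕ) :
    Ring.multichoose s n = risingFactorial s n / n ! := by
  rw [eq_div_iff (Nat.cast_ne_zero.2 n.factorial_ne_zero), risingFactorial_eq_ascPochhammer_eval,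
    ← Polynomial.ascPochhammer_smeval_eq_eval, ← Ring.factorial_nsmul_multichoose_eq_ascPochhammer,
    nsmul_eq_mul, mul_comm]

lemma Ring.multichoose_succ_mul (s : ℂ) (n : ℕ) :
    (n + 1 : ℂ) * Ring.multichoose s (n + 1) = (s + n) * Ring.multichoose s n := by
  rw [multichoose_eq_risingFactorial_div, multichoose_eq_risingFactorial_div, risingFactorial_succ,
    Nat.factorial_succ]
  push_cast
  field_simp

variable (s : ℂ) {z : ℂ}

lemma hasSum_multichoose_mul_pow (hz : ‖z‖ < 1) :
    HasSum (fun n => Ring.multichoose s n * z ^ n) ((1 - z) ^ (-s)) := by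
  have h := (Complex.one_div_one_sub_cpow_hasFPowerSeriesOnBall_zero s).hasSum (y := z)
    (mem_eball_zero_iff.2 (by rw [enorm_eq_nnnorm]; exact_mod_cast hz))
  simpa [ofScalars_apply_eq, Ring.multichoose_eq, Complex.cpow_neg, mul_comm] using h

lemma summable_norm_multichoose_mul_pow (hz : ‖z‖ < 1) :
    Summable fun n => ‖Ring.multichoose s n * z ^ n‖ := by
  have h := (Complex.one_div_one_sub_cpow_hasFPowerSeriesOnBall_zero s).r_le
  simp only [← Ring.multichoose_eq] at h
  exact summable_norm_mul_pow_of_lt_radius (lt_of_lt_of_le (mod_cast hz) h)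

end Binomial

section Hypergeometric

noncomputable def hyp2F1Coeff (a b c : ℂ) (n : ℕ) : ℂ :=
  risingFactorial a n * risingFactorial b n / (risingFactorial c n * n !)

variable (a b : ℂ) {c : ℂ}

lemma hyp2F1_eq_tsum (c z : ℂ) : hyp2F1 a b c z = ∑' n, hyp2F1Coeff a b c n * z ^ n := rfl

lemma hyp2F1Coeff_eq_ordinaryHypergeometricCoefficient (c : ℂ) :
    hyp2F1Coeff a b c = ordinaryHypergeometricCoefficient a b c := by
  ext n
  simp only [hyp2F1Coeff, ordinaryHypergeometricCoefficient, risingFactorial_eq_ascPochhammer_eval]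
  ring

lemma summable_norm_hyp2F1Coeff_mul_pow (hc : ∀ n : ℕ, c ≠ -(n : ℂ)) {z : ℂ} (hz : ‖z‖ < 1) :
    Summable fun n => ‖hyp2F1Coeff a b c n * z ^ n‖ := by
  have h := one_le_radius_ordinaryHypergeometricSeries ℂ a b hc
  rw [ordinaryHypergeometricSeries, ← hyp2F1Coeff_eq_ordinaryHypergeometricCoefficient] at h
  exact summable_norm_mul_pow_of_lt_radius (lt_of_lt_of_le (mod_cast hz) h)

lemma hyp2F1Coeff_zero (c : ℂ) : hyp2F1Coeff a b c 0 = 1 := by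
  simp [hyp2F1Coeff, risingFactorial]

lemma hyp2F1Coeff_succ (hc : ∀ n : ℕ, c ≠ -(n : ℂ)) (n : ℕ) :
    (n + 1 : ℂ) * (c + n) * hyp2F1Coeff a b c (n + 1) =
      (a + n) * (b + n) * hyp2F1Coeff a b c n := by
  have hcn : c + n ≠ 0 := fun h => hc n (eq_neg_of_add_eq_zero_left h)
  have := risingFactorial_ne_zero hc n
  simp only [hyp2F1Coeff, risingFactorial_succ, Nat.factorial_succ]
  push_cast
  field_simp

lemma eq_hyp2F1Coeff_of_succ (hc : ∀ n : ℕ, c ≠ -(n : ℂ)) {f : ℕ → ℂ} (h0 : f 0 = 1)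
    (hsucc : ∀ n : ℕ, (n + 1 : ℂ) * (c + n) * f (n + 1) = (a + n) * (b + n) * f n) :
    f = hyp2F1Coeff a b c := by
  funext n
  induction n with
  | zero => rw [h0, hyp2F1Coeff_zero]
  | succ n ih =>
    have hcn : c + n ≠ 0 := fun h => hc n (eq_neg_of_add_eq_zero_left h)
    refine mul_left_cancel₀ (mul_ne_zero (Nat.cast_add_one_ne_zero n) hcn) ?_
    rw [hsucc, hyp2F1Coeff_succ a b hc, ih]

end Hypergeometric

section Euler

noncomputable def eulerCoeff (a b c : ℂ) (n : ℕ) : ℂ :=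
  ∑ k ∈ range (n + 1), Ring.multichoose (a + b - c) k * hyp2F1Coeff (c - a) (c - b) c (n - k)

variable (a b : ℂ) {c : ℂ}

lemma eulerCoeff_succ (hc : ∀ n : ℕ, c ≠ -(n : ℂ)) (n : ℕ) :
    (n + 1 : ℂ) * (c + n) * eulerCoeff a b c (n + 1) = (a + n) * (b + n) * eulerCoeff a b c n := by
  set e := Ring.multichoose (a + b - c)
  set B := hyp2F1Coeff (c - a) (c - b) c
  set G : ℕ → ℂ := fun k => k * (k - c - 2 * n - 1) * e k * B (n + 1 - k)
  have step : ∀ k ∈ range (n + 1),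
      (n + 1 : ℂ) * (c + n) * (e k * B (n + 1 - k)) - (a + n) * (b + n) * (e k * B (n - k)) =
        G (k + 1) - G k := by
    intro k hk
    obtain ⟨m, rfl⟩ : ∃ m, n = m + k := ⟨n - k, by grind⟩
    have hB : (m + 1 : ℂ) * (c + m) * B (m + 1) = (c - a + m) * (c - b + m) * B m :=
      hyp2F1Coeff_succ (c - a) (c - b) hc m
    have he : (k + 1 : ℂ) * e (k + 1) = (a + b - c + k) * e k :=
      Ring.multichoose_succ_mul (a + b - c) k
    simp only [G, show m + k + 1 - k = m + 1 by omega, show m + k - k = m by omega,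
      show m + k + 1 - (k + 1) = m by omega]
    push_cast
    linear_combination e k * hB - ((k : ℂ) - c - 2 * (m + k)) * B m * he
  have telescope := sum_congr rfl step
  rw [sum_sub_distrib, sum_range_sub G, ← mul_sum, ← mul_sum] at telescope
  rw [eulerCoeff, eulerCoeff, sum_range_succ]
  simp only [G, Nat.sub_self] at telescope ⊢
  push_cast at telescope ⊢
  linear_combination telescope

lemma eulerCoeff_eq_hyp2F1Coeff (hc : ∀ n : ℕ, c ≠ -(n : ℂ)) :
    eulerCoeff a b c = hyp2F1Coeff a b c :=
  eq_hyp2F1Coeff_of_succ a b hc (by simp [eulerCoeff, hyp2F1Coeff_zero]) (eulerCoeff_succ a b hc)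

end Euler

theorem stmt_10 (a b c z : ℂ) (hz : ‖z‖ < 1) (hc : ∀ n : ℕ, c ≠ -(n : ℂ)) :
    hyp2F1 a b c z = (1 - z) ^ (c - a - b) * hyp2F1 (c - a) (c - b) c z := by
  have binomial : (1 - z) ^ (c - a - b) = ∑' n, Ring.multichoose (a + b - c) n * z ^ n := by
    rw [(hasSum_multichoose_mul_pow (a + b - c) hz).tsum_eq, neg_sub, sub_sub]
  rw [binomial, hyp2F1_eq_tsum, hyp2F1_eq_tsum, tsum_mul_tsum_eq_tsum_sum_range_of_summable_norm
    (summable_norm_multichoose_mul_pow _ hz) (summable_norm_hyp2F1Coeff_mul_pow _ _ hc hz)]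
  refine tsum_congr fun n => ?_
  rw [← eulerCoeff_eq_hyp2F1Coeff a b hc, eulerCoeff, sum_mul]
  refine sum_congr rfl fun k hk => ?_
  rw [← pow_mul_pow_sub z (Nat.le_of_lt_succ (mem_range.1 hk))]
  ring
end

section
/- Higher-derivative quotient formula: let F, G be functions analytic at a point z with G(z) ≠ 0, and let R = F/G. Then for every n ∈ ℕ₀, R^{(n)}(z) = ∑_{k=0}^{n} (−1)^k (n+1 choose k+1) (F·G^k)^{(n)}(z) / G(z)^{k+1}. -/
/-!
Normalise so that `g z = 1`. Near `z` the geometric series with remainder gives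
`f / g = ∑_{k ≤ n} f (1 - g)^k + (1 - g)^(n+1) f / g`, and by Leibniz the remainder, which
carries the factor `(1 - g)^(n+1)` vanishing at `z`, has zero `n`-th derivative there.
Expanding `(1 - g)^k` binomially and summing over `k` with the hockey-stick identity
`∑_{k=j}^{n} C(k, j) = C(n+1, j+1)` gives the formula.
-/

open Finset Topology

theorem div_eq_sum_mul_one_sub_pow_add {K : Type*} [Field K] {x : K} (hx : x ≠ 0) (y : K)
    (n : ℕ) :
    y / x = ∑ k ∈ range n, y * (1 - x) ^ k + (1 - x) ^ n * (y / x) := by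
  have h := geom_sum_mul_neg (1 - x) n
  rw [sub_sub_cancel] at h
  rw [← mul_sum]
  field_simp
  linear_combination (-y) * h

theorem sum_range_sum_range_choose_smul {M : Type*} [AddCommMonoid M] (a : ℕ → M) (n : ℕ) :
    ∑ k ∈ range (n + 1), ∑ j ∈ range (k + 1), k.choose j • a j =
      ∑ j ∈ range (n + 1), (n + 1).choose (j + 1) • a j := by
  rw [sum_comm' (t' := range (n + 1)) (s' := fun j => Icc j n)]
  · simp only [← sum_smul, Nat.sum_Icc_choose]
  · intro k j
    simp only [mem_range, mem_Icc]
    omega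

section Calculus

variable {𝕜 : Type*} [NontriviallyNormedField 𝕜]

theorem iteratedDeriv_pow_mul_eq_zero_of_lt {v q : 𝕜 → 𝕜} {z : 𝕜} {i m : ℕ}
    (hv : ContDiffAt 𝕜 i v z) (hq : ContDiffAt 𝕜 i q z) (hvz : v z = 0) (him : i < m) :
    iteratedDeriv i (fun w => v w ^ m * q w) z = 0 := by
  induction m generalizing i with
  | zero => omega
  | succ m ih =>
    have hsplit : (fun w => v w ^ (m + 1) * q w) = fun w => v w * (v w ^ m * q w) := by
      funext w; ring
    rw [hsplit, iteratedDeriv_fun_mul hv (hv.pow m |>.mul hq)]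
    refine sum_eq_zero fun j hj => ?_
    rcases Nat.eq_zero_or_pos j with rfl | hj0
    · simp [hvz]
    · rw [mem_range] at hj
      rw [ih (hv.of_le (by norm_cast; omega)) (hq.of_le (by norm_cast; omega)) (by omega),
        mul_zero]

theorem iteratedDeriv_mul_one_sub_pow {f g : 𝕜 → 𝕜} {z : 𝕜} {n : ℕ}
    (hf : ContDiffAt 𝕜 n f z) (hg : ContDiffAt 𝕜 n g z) (k : ℕ) :
    iteratedDeriv n (fun w => f w * (1 - g w) ^ k) z =
      ∑ j ∈ range (k + 1),
        (-1) ^ j * (k.choose j : 𝕜) * iteratedDeriv n (fun w => f w * g w ^ j) z := by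
  have hexpand : (fun w => f w * (1 - g w) ^ k) =
      fun w => ∑ j ∈ range (k + 1), (-1) ^ j * (k.choose j : 𝕜) * (f w * g w ^ j) := by
    funext w
    rw [sub_eq_neg_add, add_pow, mul_sum]
    refine sum_congr rfl fun j _ => ?_
    rw [neg_pow]
    ring
  rw [hexpand, iteratedDeriv_fun_sum fun j _ => contDiffAt_const.mul (hf.mul (hg.pow j))]
  simp only [iteratedDeriv_const_mul_field]

theorem iteratedDeriv_div_of_apply_eq_one {f g : 𝕜 → 𝕜} {z : 𝕜} {n : ℕ}
    (hf : ContDiffAt 𝕜 n f z) (hg : ContDiffAt 𝕜 n g z) (hgz : g z = 1) :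
    iteratedDeriv n (fun w => f w / g w) z =
      ∑ k ∈ range (n + 1), (-1) ^ k * ((n + 1).choose (k + 1) : 𝕜) *
        iteratedDeriv n (fun w => f w * g w ^ k) z := by
  have hg0 : g z ≠ 0 := hgz ▸ one_ne_zero
  have hfg : ContDiffAt 𝕜 n (fun w => f w / g w) z := hf.div hg hg0
  have hexpand : (fun w => f w / g w) =ᶠ[𝓝 z] fun w =>
      ∑ k ∈ range (n + 1), f w * (1 - g w) ^ k + (1 - g w) ^ (n + 1) * (f w / g w) := by
    filter_upwards [hg.continuousAt.eventually_ne hg0] with w hw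
    exact div_eq_sum_mul_one_sub_pow_add hw (f w) (n + 1)
  have hremainder : iteratedDeriv n (fun w => (1 - g w) ^ (n + 1) * (f w / g w)) z = 0 :=
    iteratedDeriv_pow_mul_eq_zero_of_lt (contDiffAt_const.sub hg) hfg (by simp [hgz])
      n.lt_succ_self
  rw [hexpand.iteratedDeriv_eq, iteratedDeriv_fun_add
    (ContDiffAt.sum fun k _ => hf.mul ((contDiffAt_const.sub hg).pow k))
    (((contDiffAt_const.sub hg).pow _).mul hfg), hremainder, add_zero,
    iteratedDeriv_fun_sum fun k _ => hf.mul ((contDiffAt_const.sub hg).pow k)]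
  simp only [iteratedDeriv_mul_one_sub_pow hf hg]
  simpa only [nsmul_eq_mul, mul_comm, mul_left_comm, mul_assoc] using
    sum_range_sum_range_choose_smul
      (fun j => (-1) ^ j * iteratedDeriv n (fun w => f w * g w ^ j) z) n

theorem iteratedDeriv_div_eq_sum {f g : 𝕜 → 𝕜} {z : 𝕜} {n : ℕ}
    (hf : ContDiffAt 𝕜 n f z) (hg : ContDiffAt 𝕜 n g z) (hgz : g z ≠ 0) :
    iteratedDeriv n (fun w => f w / g w) z =
      ∑ k ∈ range (n + 1), (-1) ^ k * ((n + 1).choose (k + 1) : 𝕜) *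
        iteratedDeriv n (fun w => f w * g w ^ k) z / g z ^ (k + 1) := by
  have hquot : (fun w => f w / g w) = fun w => (f w / g z) / (g w / g z) := by
    funext w; rw [div_div_div_cancel_right₀ hgz]
  have hprod (k : ℕ) : (fun w => f w / g z * (g w / g z) ^ k) =
      fun w => f w * g w ^ k / g z ^ (k + 1) := by
    funext w; rw [div_pow]; field_simp; ring
  rw [hquot, iteratedDeriv_div_of_apply_eq_one (hf.div_const _) (hg.div_const _) (div_self hgz)]
  refine sum_congr rfl fun k _ => ?_
  rw [hprod, iteratedDeriv_div_const, mul_div_assoc]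

end Calculus

theorem stmt_17 (F G : ℂ → ℂ) (z : ℂ)
    (hF : AnalyticAt ℂ F z) (hG : AnalyticAt ℂ G z) (hGz : G z ≠ 0) (n : ℕ) :
    iteratedDeriv n (fun w => F w / G w) z =
      ∑ k ∈ Finset.range (n + 1), (-1 : ℂ) ^ k * ((n + 1).choose (k + 1) : ℂ) *
        iteratedDeriv n (fun w => F w * (G w) ^ k) z / (G z) ^ (k + 1) :=
  iteratedDeriv_div_eq_sum hF.contDiffAt hG.contDiffAt hGz
end
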